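/- arXiv:0804.1644 — 11 statements merged into one kernel-verified Lean document; each statement's English description precedes it below -/
import Mathlib

section
/- Let R be an associative unital ℂ-algebra, q, p ∈ R with qp − pq = h·1 for some h ∈ ℂ, and suppose q is invertible in R. For a parameter b ∈ ℂ, set x = q⁻¹ and y = −bq − q²p. Then xy − yx = h·1; i.e., the birational change of variables (q,p) ↦ (x,y) of Takano type for the quantum Painlevé II (chart 0) is a canonical transformation. -/
/-! Conjugating by `q` turns `[q⁻¹, y]` into `q⁻¹ [y, q] q⁻¹`, and `[y, q] = q² [q, p] = h q²`
since the `b q` part of `y` commutes with `q`; hence `[q⁻¹, y] = q⁻¹ (h q²) q⁻¹ = h`. -/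

theorem invOf_mul_sub_mul_invOf {R : Type*} [Ring R] (q a : R) [Invertible q] :
    ⅟q * a - a * ⅟q = ⅟q * (a * q - q * a) * ⅟q := by
  simp [mul_sub, sub_mul, mul_assoc]

theorem neg_smul_sub_sq_mul_mul_sub_mul {S R : Type*} [CommRing S] [Ring R] [Algebra S R]
    (b : S) (q p : R) :
    (-(b • q) - q ^ 2 * p) * q - q * (-(b • q) - q ^ 2 * p) = q ^ 2 * (q * p - p * q) := by
  simp only [sub_mul, mul_sub, neg_mul, mul_neg, smul_mul_assoc, mul_smul_comm]
  noncomm_ring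

/-- Takano chart-0 change of variables for quantum Painlevé II is canonical:
if `q p - p q = h • 1` and `q` is invertible, then with `x = q⁻¹` and
`y = -b q - q² p` one has `x y - y x = h • 1`. -/
theorem quantum_PII_chart0_canonical
    {R : Type*} [Ring R] [Algebra ℂ R]
    (h b : ℂ) (q p : R) [Invertible q]
    (hcomm : q * p - p * q = h • (1 : R))
    (x y : R) (hx : x = ⅟q) (hy : y = -(b • q) - q ^ 2 * p) :
    x * y - y * x = h • (1 : R) := by
  subst hx hy
  rw [invOf_mul_sub_mul_invOf, neg_smul_sub_sq_mul_mul_sub_mul, hcomm, mul_smul_one,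
    mul_smul_comm, smul_mul_assoc]
  simp [sq]
end

section
/- Let R be an associative unital ℂ-algebra, q, p ∈ R with qp − pq = h·1 for some h ∈ ℂ, and suppose q is invertible in R. For parameters a, t ∈ ℂ, set x = q⁻¹ and y = 2q⁴ − q²p + tq² − aq. Then xy − yx = h·1; i.e., the Takano chart-1 change of variables for the quantum Painlevé II equation is a canonical transformation. -/
/-!
The inner derivation `⁅q⁻¹, ·⁆` kills every polynomial in `q`, so only the term `-q²p` of `y`
contributes. Since `⁅q⁻¹, p⁆ = -q⁻¹⁅q, p⁆q⁻¹ = -h q⁻²` and `q⁻¹` commutes with `q²`, that term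
gives `⁅q⁻¹, -q²p⁆ = q² · h q⁻² = h`.
-/

attribute [local instance] LieRing.ofAssociativeRing

section

variable {R : Type*} [Ring R]

theorem lie_invOf_left (q p : R) [Invertible q] : ⁅⅟q, p⁆ = -(⅟q * ⁅q, p⁆ * ⅟q) := by
  simp only [Ring.lie_def, mul_sub, sub_mul, ← mul_assoc, invOf_mul_self, one_mul]
  simp only [mul_assoc, mul_invOf_self, mul_one, neg_sub]

theorem Commute.lie_mul_right {a b : R} (hab : Commute a b) (c : R) :
    ⁅a, b * c⁆ = b * ⁅a, c⁆ := by
  rw [Ring.lie_def, Ring.lie_def, mul_sub, ← mul_assoc, hab.eq, mul_assoc, mul_assoc]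

theorem lie_invOf_pow (q : R) [Invertible q] (n : ℕ) : ⁅⅟q, q ^ n⁆ = 0 :=
  ((Commute.refl q).pow_right n).invOf_left.lie_eq

theorem lie_invOf_sq_mul (q p : R) [Invertible q] (hc : Commute q ⁅q, p⁆) :
    ⁅⅟q, q ^ 2 * p⁆ = -⁅q, p⁆ := by
  have hq2 : Commute (⅟q) (q ^ 2) := ((Commute.refl q).pow_right 2).invOf_left
  rw [hq2.lie_mul_right, lie_invOf_left, mul_neg, pow_two]
  simp only [← mul_assoc, mul_invOf_cancel_right, hc.eq]

end

/-- Takano chart-1 change of variables for quantum Painlevé II is canonical: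
if `q p - p q = h • 1` and `q` is invertible, then with `x = q⁻¹` and
`y = 2q⁴ - q²p + t q² - a q` one has `x y - y x = h • 1`. -/
theorem quantum_PII_chart1_canonical
    {R : Type*} [Ring R] [Algebra ℂ R]
    (h a t : ℂ) (q p : R) [Invertible q]
    (hcomm : q * p - p * q = h • (1 : R))
    (x y : R) (hx : x = ⅟q)
    (hy : y = (2 : ℂ) • q ^ 4 - q ^ 2 * p + t • q ^ 2 - a • q) :
    x * y - y * x = h • (1 : R) := by
  subst hx hy
  have hqp : ⁅q, p⁆ = h • 1 := hcomm
  have hcentral : Commute q ⁅q, p⁆ := hqp ▸ (Commute.one_right q).smul_right h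
  have hq : ⁅⅟q, q⁆ = 0 := (Commute.refl q).invOf_left.lie_eq
  rw [← Ring.lie_def, lie_sub, lie_add, lie_sub, lie_smul, lie_smul, lie_smul,
    lie_invOf_sq_mul q p hcentral, lie_invOf_pow, lie_invOf_pow, hq, hqp]
  simp
end

section
/- Let R be an associative unital ℂ-algebra, q, p ∈ R with qp − pq = h·1 (h ∈ ℂ), q invertible, and b, t ∈ ℂ. Put H_II = (1/2)p² − q²p − (t/2)p − bq, x = q⁻¹ and y = −bq − q²p. Then [x, H_II] = h·(x⁴y + (b−h)x³ + (t/2)x² + 1) and [y, H_II] = h·(−2x³y² − txy + 3(h−b)x²y − b(b−h)x − (bt/2)), where [u,v] = uv − vu; that is, the quantum Painlevé II system transformed to the chart-0 coordinates (x,y) is given by the polynomial vector field dx/dt = x⁴y + (b−h)x³ + (t/2)x² + 1, dy/dt = −2x³y² − txy + 3(h−b)x²y − b(b−h)x − bt/2. -/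
/-!
The coordinates `x = q⁻¹`, `y = -b q - q² p` are again canonical, `x y - y x = h`, and invert
to `p = -(x² y + b x)`. Since `q² p + b q = -y`, the Hamiltonian becomes
`H = ½ (x² y + b x)² + (t/2)(x² y + b x) + y`, a polynomial in `x, y`. Both commutators are
then computed in the Weyl algebra by normal ordering with `y x = x y - h`.
-/

section Weyl

variable {S R : Type*} [CommSemiring S] [Ring R] [Algebra S R] {h : S} {x y : R}

theorem mul_swap_of_commutator_eq (hxy : x * y - y * x = h • (1 : R)) :
    y * x = x * y - h • (1 : R) := by
  rw [← hxy]; abel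

theorem mul_mul_swap_of_commutator_eq (hxy : x * y - y * x = h • (1 : R)) (z : R) :
    y * (x * z) = x * (y * z) - h • z := by
  rw [← mul_assoc, mul_swap_of_commutator_eq hxy, sub_mul, mul_assoc, smul_mul_assoc, one_mul]

end Weyl

section Chart0

variable {S R : Type*} [CommSemiring S] [Ring R] [Algebra S R] {h : S} (b : S) (q p : R)
  [Invertible q]

theorem mul_invOf_sub_invOf_mul (hcomm : q * p - p * q = h • (1 : R)) :
    p * ⅟q - ⅟q * p = h • (⅟q * ⅟q) := by
  calc p * ⅟q - ⅟q * p = ⅟q * (q * p - p * q) * ⅟q := by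
        simp only [mul_sub, sub_mul, mul_assoc, invOf_mul_cancel_left, mul_invOf_self, mul_one]
    _ = h • (⅟q * ⅟q) := by rw [hcomm, mul_smul_comm, mul_one, smul_mul_assoc]

theorem commutator_chart0_coordinates (hcomm : q * p - p * q = h • (1 : R)) :
    ⅟q * (-(b • q) - q ^ 2 * p) - (-(b • q) - q ^ 2 * p) * ⅟q = h • (1 : R) := by
  have hp : p * ⅟q = ⅟q * p + h • (⅟q * ⅟q) := by
    rw [← mul_invOf_sub_invOf_mul q p hcomm]; abel
  simp only [sq, mul_sub, sub_mul, mul_neg, neg_mul, mul_smul_comm, smul_mul_assoc, mul_assoc,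
    invOf_mul_cancel_left, invOf_mul_self, mul_invOf_self, hp, mul_add, mul_invOf_cancel_left]
  abel

theorem invOf_sq_mul_chart0_add : ⅟q ^ 2 * (-(b • q) - q ^ 2 * p) + b • ⅟q = -p := by
  simp only [sq, mul_sub, mul_neg, mul_smul_comm, mul_assoc, invOf_mul_cancel_left, invOf_mul_self,
    mul_one]
  abel

end Chart0

section Chart0Hamiltonian

variable {R : Type*} [Ring R] [Algebra ℂ R] {h : ℂ} {x y : R}

noncomputable def painleveIIChart0Hamiltonian (b t : ℂ) (x y : R) : R :=
  (1 / 2 : ℂ) • (x ^ 2 * y + b • x) ^ 2 + (t / 2) • (x ^ 2 * y + b • x) + y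

variable (b t : ℂ)

theorem commutator_painleveIIChart0Hamiltonian_left (hxy : x * y - y * x = h • (1 : R)) :
    x * painleveIIChart0Hamiltonian b t x y - painleveIIChart0Hamiltonian b t x y * x
      = h • (x ^ 4 * y + (b - h) • x ^ 3 + (t / 2) • x ^ 2 + 1) := by
  simp only [painleveIIChart0Hamiltonian, pow_succ, pow_zero, one_mul, mul_add, add_mul, mul_sub,
    sub_mul, smul_mul_assoc, mul_smul_comm, smul_smul, smul_add, mul_assoc, mul_one,
    mul_swap_of_commutator_eq hxy, mul_mul_swap_of_commutator_eq hxy]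
  match_scalars <;> ring

theorem commutator_painleveIIChart0Hamiltonian_right (hxy : x * y - y * x = h • (1 : R)) :
    y * painleveIIChart0Hamiltonian b t x y - painleveIIChart0Hamiltonian b t x y * y
      = h • (-((2 : ℂ) • (x ^ 3 * y ^ 2)) - t • (x * y)
          + (3 * (h - b)) • (x ^ 2 * y) - (b * (b - h)) • x - (b * t / 2) • (1 : R)) := by
  simp only [painleveIIChart0Hamiltonian, pow_succ, pow_zero, one_mul, mul_add, add_mul, mul_sub,
    sub_mul, smul_mul_assoc, mul_smul_comm, smul_smul, smul_add, smul_sub, smul_neg, mul_assoc,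
    mul_one, mul_swap_of_commutator_eq hxy, mul_mul_swap_of_commutator_eq hxy]
  match_scalars <;> ring

theorem painleveIIHamiltonian_eq_chart0 (q p : R) [Invertible q] :
    (1 / 2 : ℂ) • p ^ 2 - q ^ 2 * p - (t / 2) • p - b • q
      = painleveIIChart0Hamiltonian b t (⅟q : R) (-(b • q) - q ^ 2 * p) := by
  rw [painleveIIChart0Hamiltonian, invOf_sq_mul_chart0_add, neg_sq, smul_neg]
  abel

end Chart0Hamiltonian

/-- The quantum Painlevé II system transformed to Takano chart-0 coordinates
`x = q⁻¹`, `y = -b q - q² p` is given by the polynomial vector field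
`dx/dt = x⁴y + (b-h)x³ + (t/2)x² + 1`,
`dy/dt = -2x³y² - t x y + 3(h-b)x²y - b(b-h)x - bt/2`. -/
theorem quantum_PII_chart0_vector_field
    {R : Type*} [Ring R] [Algebra ℂ R]
    (h b t : ℂ) (q p : R) [Invertible q]
    (hcomm : q * p - p * q = h • (1 : R))
    (H x y : R)
    (hH : H = (1 / 2 : ℂ) • p ^ 2 - q ^ 2 * p - (t / 2) • p - b • q)
    (hx : x = ⅟q) (hy : y = -(b • q) - q ^ 2 * p) :
    x * H - H * x
      = h • (x ^ 4 * y + (b - h) • x ^ 3 + (t / 2) • x ^ 2 + 1) ∧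
    y * H - H * y
      = h • (-((2 : ℂ) • (x ^ 3 * y ^ 2)) - t • (x * y)
          + (3 * (h - b)) • (x ^ 2 * y) - (b * (b - h)) • x
          - (b * t / 2) • (1 : R)) := by
  have hxy : x * y - y * x = h • (1 : R) := by
    rw [hx, hy]; exact commutator_chart0_coordinates b q p hcomm
  rw [hH, painleveIIHamiltonian_eq_chart0, ← hx, ← hy]
  exact ⟨commutator_painleveIIChart0Hamiltonian_left b t hxy,
    commutator_painleveIIChart0Hamiltonian_right b t hxy⟩
end

section
/- Let R be an associative unital ℂ-algebra and x, y ∈ R with xy − yx = h·1 (h ∈ ℂ), and let b, t ∈ ℂ. Put H₀ = (1/2)x⁴y² + (b−h)x³y + (1/2)b(b−h)x² + (t/2)x²y + (bt/2)x + y (normally ordered, x-powers to the left). Then [x, H₀] = h·(x⁴y + (b−h)x³ + (t/2)x² + 1) and [y, H₀] = h·(−2x³y² − txy + 3(h−b)x²y − b(b−h)x − bt/2). Hence the transformed quantum Painlevé II system in the chart-0 coordinates is again a Hamiltonian system with the polynomial Hamiltonian H₀. -/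
/-!
On normally ordered monomials `xⁿ yᵐ`, the relation `⁅x, y⁆ = h` makes `ad x` act as `h ∂/∂y`
and `ad y` as `-h ∂/∂x`. Hence `⁅x, H₀⁆ = h ∂H₀/∂y` and `⁅y, H₀⁆ = -h ∂H₀/∂x`, which are read off
monomial by monomial.
-/

section CanonicalCommutation

attribute [local instance] LieRing.ofAssociativeRing LieAlgebra.ofAssociativeAlgebra

variable {𝕜 A : Type*} [CommRing 𝕜] [Ring A] [Algebra 𝕜 A]

theorem Ring.lie_mul (a b c : A) : ⁅a, b * c⁆ = ⁅a, b⁆ * c + b * ⁅a, c⁆ := by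
  simp only [Ring.lie_def]
  noncomm_ring

theorem lie_pow_succ_of_lie_eq_smul_one {a b : A} {c : 𝕜} (hab : ⁅a, b⁆ = c • (1 : A))
    (n : ℕ) : ⁅a, b ^ (n + 1)⁆ = ((n + 1 : 𝕜) * c) • b ^ n := by
  induction n with
  | zero => simpa using hab
  | succ n ih =>
    rw [pow_succ b (n + 1), Ring.lie_mul, ih, hab, smul_mul_assoc, mul_smul_comm, mul_one,
      ← pow_succ, ← add_smul]
    push_cast
    ring_nf

variable {x y : A} {h : 𝕜}

theorem lie_pow_mul_pow_succ_of_lie_eq_smul_one (hxy : ⁅x, y⁆ = h • (1 : A)) (n m : ℕ) :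
    ⁅x, x ^ n * y ^ (m + 1)⁆ = ((m + 1 : 𝕜) * h) • (x ^ n * y ^ m) := by
  rw [Ring.lie_mul, (Commute.self_pow x n).lie_eq, zero_mul, zero_add,
    lie_pow_succ_of_lie_eq_smul_one hxy, mul_smul_comm]

theorem lie_pow_succ_mul_pow_of_lie_eq_smul_one (hxy : ⁅x, y⁆ = h • (1 : A)) (n m : ℕ) :
    ⁅y, x ^ (n + 1) * y ^ m⁆ = -((n + 1 : 𝕜) * h) • (x ^ n * y ^ m) := by
  have hyx : ⁅y, x⁆ = (-h) • (1 : A) := by rw [← lie_skew, hxy, neg_smul]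
  rw [Ring.lie_mul, (Commute.self_pow y m).lie_eq, mul_zero, add_zero,
    lie_pow_succ_of_lie_eq_smul_one hyx, smul_mul_assoc, mul_neg]

end CanonicalCommutation

/-- The transformed quantum Painlevé II system in chart-0 coordinates is again a
Hamiltonian system with polynomial Hamiltonian
`H₀ = (1/2)x⁴y² + (b-h)x³y + (1/2)b(b-h)x² + (t/2)x²y + (bt/2)x + y`. -/
theorem quantum_PII_chart0_hamiltonian
    {R : Type*} [Ring R] [Algebra ℂ R]
    (h b t : ℂ) (x y : R)
    (hcomm : x * y - y * x = h • (1 : R))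
    (H₀ : R)
    (hH₀ : H₀ = (1 / 2 : ℂ) • (x ^ 4 * y ^ 2) + (b - h) • (x ^ 3 * y)
        + (1 / 2 * b * (b - h)) • x ^ 2 + (t / 2) • (x ^ 2 * y)
        + (b * t / 2) • x + y) :
    x * H₀ - H₀ * x
      = h • (x ^ 4 * y + (b - h) • x ^ 3 + (t / 2) • x ^ 2 + 1) ∧
    y * H₀ - H₀ * y
      = h • (-((2 : ℂ) • (x ^ 3 * y ^ 2)) - t • (x * y)
          + (3 * (h - b)) • (x ^ 2 * y) - (b * (b - h)) • x
          - (b * t / 2) • (1 : R)) := by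
  -- Installed only here: as instances at the statement, they would change how its `•` elaborates.
  let _ : LieRing R := LieRing.ofAssociativeRing
  let _ : LieAlgebra ℂ R := LieAlgebra.ofAssociativeAlgebra
  have hxy : ⁅x, y⁆ = h • (1 : R) := hcomm
  have adx := lie_pow_mul_pow_succ_of_lie_eq_smul_one hxy
  have ady := lie_pow_succ_mul_pow_of_lie_eq_smul_one hxy
  have adx_x4y2 := adx 4 1
  have adx_x3y := adx 3 0
  have adx_x2y := adx 2 0
  have ady_x4y2 := ady 3 2
  have ady_x3y := ady 2 1
  have ady_x2y := ady 1 1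
  have ady_x2 := ady 1 0
  have ady_x := ady 0 0
  simp only [pow_zero, pow_one, mul_one, zero_add] at adx_x4y2 adx_x3y adx_x2y
  simp only [pow_zero, pow_one, mul_one, zero_add] at ady_x4y2 ady_x3y ady_x2y ady_x2 ady_x
  rw [← Ring.lie_def, ← Ring.lie_def, hH₀]
  simp only [lie_add, lie_smul, adx_x4y2, adx_x3y, adx_x2y, ady_x4y2, ady_x3y, ady_x2y, ady_x2,
    ady_x, hxy, lie_self, (Commute.self_pow x 2).lie_eq]
  constructor <;> module
end

section
/- Let R be an associative unital ℂ-algebra, q, p ∈ R with qp − pq = h·1 (h ∈ ℂ), q invertible, and a, b, t ∈ ℂ. Put H_III = q²p² − q²p + (a+b)qp − bq + tp, and set x = q⁻¹, y = −bq − q²p. Let H₀(x,y) = x²y² − tx²y + (−a+b−2h)xy − btx + y (normally ordered, x-powers to the left). Then [x, H_III] = [x, H₀(x,y)] and [y, H_III] = [y, H₀(x,y)]; that is, the quantum Painlevé III system is transformed in the chart-0 coordinates into the polynomial Hamiltonian system with Hamiltonian H₀. -/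
/-!
In the chart-0 coordinates the new Hamiltonian differs from the old one only by a central
constant: normally ordering `x²y²`, `x²y` and `xy` with `xq = 1` and `pq = qp - h` gives
`H₀ = H_III + (ab + bh)·1`, and adding a scalar does not change commutators.
-/

section

variable {𝕜 R : Type*} [CommRing 𝕜] [Ring R] [Algebra 𝕜 R]

theorem commutator_add_smul_one_right (x H : R) (c : 𝕜) :
    x * (H + c • (1 : R)) - (H + c • (1 : R)) * x = x * H - H * x := by
  rw [mul_add, add_mul, mul_smul_comm, smul_mul_assoc, mul_one, one_mul]
  abel

variable {h b : 𝕜} {q p x y : R}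

theorem mul_eq_of_sub_eq_smul_one (hcomm : q * p - p * q = h • (1 : R)) :
    p * q = q * p - h • (1 : R) := by
  rw [← hcomm, sub_sub_cancel]

theorem mul_sq_of_sub_eq_smul_one (hcomm : q * p - p * q = h • (1 : R)) :
    p * q ^ 2 = q ^ 2 * p - (2 * h) • q := by
  rw [sq, ← mul_assoc, mul_eq_of_sub_eq_smul_one hcomm, sub_mul, mul_assoc,
    mul_eq_of_sub_eq_smul_one hcomm]
  simp only [mul_sub, mul_smul_comm, smul_mul_assoc, one_mul, mul_one, ← mul_assoc]
  module

theorem mul_eq_of_chart0 (hxq : x * q = 1) (hy : y = -(b • q) - q ^ 2 * p) :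
    x * y = -(b • (1 : R)) - q * p := by
  rw [hy, mul_sub, mul_neg, mul_smul_comm, hxq, sq, ← mul_assoc, ← mul_assoc, hxq, one_mul]

theorem sq_mul_eq_of_chart0 (hxq : x * q = 1) (hy : y = -(b • q) - q ^ 2 * p) :
    x ^ 2 * y = -(b • x) - p := by
  rw [sq, mul_assoc, mul_eq_of_chart0 hxq hy, mul_sub, mul_neg, mul_smul_comm, mul_one,
    ← mul_assoc, hxq, one_mul]

theorem sq_mul_sq_eq_of_chart0 (hcomm : q * p - p * q = h • (1 : R)) (hxq : x * q = 1)
    (hy : y = -(b • q) - q ^ 2 * p) :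
    x ^ 2 * y ^ 2 = q ^ 2 * p ^ 2 + (2 * b - 2 * h) • (q * p) + (b ^ 2 - b * h) • (1 : R) := by
  have hxqqp : x * (q ^ 2 * p) = q * p := by rw [sq, ← mul_assoc, ← mul_assoc, hxq, one_mul]
  have hpqqp : p * (q ^ 2 * p) = q ^ 2 * p ^ 2 - (2 * h) • (q * p) := by
    rw [← mul_assoc, mul_sq_of_sub_eq_smul_one hcomm, sub_mul, smul_mul_assoc, mul_assoc, ← sq]
  calc x ^ 2 * y ^ 2 = (x ^ 2 * y) * y := by rw [sq y, mul_assoc]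
    _ = (-(b • x) - p) * (-(b • q) - q ^ 2 * p) := by rw [sq_mul_eq_of_chart0 hxq hy, hy]
    _ = (b * b) • (x * q) + b • (x * (q ^ 2 * p)) + b • (p * q) + p * (q ^ 2 * p) := by
      simp only [sub_mul, neg_mul, mul_sub, mul_neg, smul_mul_assoc, mul_smul_comm]
      module
    _ = _ := by
      rw [hxq, hxqqp, mul_eq_of_sub_eq_smul_one hcomm, hpqqp]; module

theorem chart0_hamiltonian_eq {a t : 𝕜} (hcomm : q * p - p * q = h • (1 : R)) (hxq : x * q = 1)
    (hy : y = -(b • q) - q ^ 2 * p) :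
    x ^ 2 * y ^ 2 - t • (x ^ 2 * y) + (-a + b - 2 * h) • (x * y) - (b * t) • x + y
      = q ^ 2 * p ^ 2 - q ^ 2 * p + (a + b) • (q * p) - b • q + t • p
        + (a * b + b * h) • (1 : R) := by
  rw [sq_mul_sq_eq_of_chart0 hcomm hxq hy, sq_mul_eq_of_chart0 hxq hy, mul_eq_of_chart0 hxq hy, hy]
  module

end

/-- In the Takano chart-0 coordinates `x = q⁻¹`, `y = -bq - q²p`, the quantum
Painlevé III system becomes the polynomial Hamiltonian system with
`H₀ = x²y² - tx²y + (-a+b-2h)xy - btx + y`. -/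
theorem quantum_PIII_chart0_hamiltonian
    {R : Type*} [Ring R] [Algebra ℂ R]
    (h a b t : ℂ) (q p : R) [Invertible q]
    (hcomm : q * p - p * q = h • (1 : R))
    (H x y H₀ : R)
    (hH : H = q ^ 2 * p ^ 2 - q ^ 2 * p + (a + b) • (q * p) - b • q + t • p)
    (hx : x = ⅟q) (hy : y = -(b • q) - q ^ 2 * p)
    (hH₀ : H₀ = x ^ 2 * y ^ 2 - t • (x ^ 2 * y) + (-a + b - 2 * h) • (x * y)
        - (b * t) • x + y) :
    x * H - H * x = x * H₀ - H₀ * x ∧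
    y * H - H * y = y * H₀ - H₀ * y := by
  have hxq : x * q = 1 := hx ▸ invOf_mul_self q
  have hH₀H : H₀ = H + (a * b + b * h) • (1 : R) := by
    rw [hH₀, hH, chart0_hamiltonian_eq hcomm hxq hy]
  rw [hH₀H, commutator_add_smul_one_right, commutator_add_smul_one_right]
  exact ⟨rfl, rfl⟩
end

section
/- Let R be an associative unital ℂ-algebra, q, p ∈ R with qp − pq = h·1 (h ∈ ℂ), q invertible, and a, b, t ∈ ℂ. Put H_III = q²p² − q²p + (a+b)qp − bq + tp, and set x = q⁻¹, y = q² − aq − q²p. Then: (i) xy − yx = h·1 (the chart-2 transformation for quantum Painlevé III is canonical); and (ii) with H₂(x,y) = x²y² − tx²y + (a−b−2h)xy − atx − y (normally ordered, x-powers to the left), one has [x, H_III] = [x, H₂(x,y)] and [y, H_III] = [y, H₂(x,y)], i.e. the transformed system is the polynomial Hamiltonian system with Hamiltonian H₂. -/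
/-!
Expressed in `q` and `p`, the chart-2 variables are `x = q⁻¹`, `xy = q - a - qp` and
`x²y = 1 - aq⁻¹ - p`. Normal ordering with `pq = qp - h` and `pq⁻¹ = q⁻¹p + hq⁻²` shows
`[x, y] = h` and `H₂(x, y) = H_III(q, p) + (a(b + h) - t)`: the two Hamiltonians differ by a
central element, so they generate the same commutators.
-/

section

variable {R : Type*} [Ring R] [Algebra ℂ R]

theorem commutator_add_smul_one (x H : R) (c : ℂ) :
    x * (H + c • 1) - (H + c • 1) * x = x * H - H * x := by
  simp only [mul_add, add_mul, mul_smul_comm, smul_mul_assoc, mul_one, one_mul]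
  abel

namespace QuantumPIII

def chart2Y (a : ℂ) (q p : R) : R := q ^ 2 - a • q - q ^ 2 * p

variable {h : ℂ} {q p : R}

theorem p_mul_q (hcomm : q * p - p * q = h • 1) : p * q = q * p - h • 1 := by
  rw [← hcomm]
  abel

theorem p_mul_q_sq (hcomm : q * p - p * q = h • 1) :
    p * q ^ 2 = q ^ 2 * p - (2 * h) • q := by
  rw [sq, ← mul_assoc, p_mul_q hcomm, sub_mul, mul_assoc, p_mul_q hcomm]
  simp only [mul_sub, smul_mul_assoc, mul_smul_comm, one_mul, mul_one, ← mul_assoc]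
  module

theorem p_mul_invOf [Invertible q] (hcomm : q * p - p * q = h • 1) :
    p * ⅟q = ⅟q * p + h • (⅟q * ⅟q) := by
  have key := congrArg (⅟q * · * ⅟q) (p_mul_q hcomm)
  simp only [mul_sub, sub_mul, ← mul_assoc, invOf_mul_self, one_mul, mul_smul_comm,
    smul_mul_assoc, mul_one] at key
  rw [mul_assoc, mul_invOf_self, mul_one] at key
  rw [key]
  abel

theorem p_mul_chart2 (a : ℂ) (hcomm : q * p - p * q = h • 1) :
    p * chart2Y a q p =
      q ^ 2 * p - q ^ 2 * p ^ 2 + (2 * h - a) • (q * p) - (2 * h) • q + (a * h) • 1 := by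
  simp only [chart2Y, mul_sub, mul_smul_comm, ← mul_assoc, p_mul_q_sq hcomm, p_mul_q hcomm]
  simp only [sub_mul, smul_mul_assoc, sq, mul_assoc]
  module

variable [Invertible q] (a : ℂ)

theorem invOf_mul_chart2 : ⅟q * chart2Y a q p = q - a • 1 - q * p := by
  simp only [chart2Y, mul_sub, mul_smul_comm, sq, ← mul_assoc, invOf_mul_self, one_mul]

theorem invOf_sq_mul_chart2 : ⅟q ^ 2 * chart2Y a q p = 1 - a • ⅟q - p := by
  rw [sq, mul_assoc, invOf_mul_chart2]
  simp only [mul_sub, mul_smul_comm, ← mul_assoc, invOf_mul_self, one_mul, mul_one]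

theorem chart2_mul_invOf (hcomm : q * p - p * q = h • 1) :
    chart2Y a q p * ⅟q = q - a • 1 - q * p - h • 1 := by
  simp only [chart2Y, sub_mul, smul_mul_assoc, mul_assoc, p_mul_invOf hcomm, mul_add, mul_smul_comm]
  simp only [sq, mul_assoc, ← mul_assoc q ⅟q, mul_invOf_self, one_mul, mul_one]
  abel

theorem chart2_canonical (hcomm : q * p - p * q = h • 1) :
    ⅟q * chart2Y a q p - chart2Y a q p * ⅟q = h • 1 := by
  rw [invOf_mul_chart2, chart2_mul_invOf a hcomm]
  abel

theorem chart2_hamiltonian_eq (b t : ℂ) (hcomm : q * p - p * q = h • 1) :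
    ⅟q ^ 2 * chart2Y a q p ^ 2 - t • (⅟q ^ 2 * chart2Y a q p)
        + (a - b - 2 * h) • (⅟q * chart2Y a q p) - (a * t) • ⅟q
        - chart2Y a q p =
      q ^ 2 * p ^ 2 - q ^ 2 * p + (a + b) • (q * p) - b • q + t • p
        + (a * (b + h) - t) • 1 := by
  have x_sq_mul_y_sq : ⅟q ^ 2 * chart2Y a q p ^ 2 =
      chart2Y a q p - a • (q - a • 1 - q * p) - p * chart2Y a q p := by
    rw [sq (chart2Y a q p), ← mul_assoc, invOf_sq_mul_chart2, sub_mul, sub_mul,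
      one_mul, smul_mul_assoc, invOf_mul_chart2]
  rw [x_sq_mul_y_sq, p_mul_chart2 a hcomm, invOf_sq_mul_chart2, invOf_mul_chart2, chart2Y]
  module

end QuantumPIII

end

open QuantumPIII in
/-- The Takano chart-2 transformation `x = q⁻¹`, `y = q² - aq - q²p` for quantum
Painlevé III is canonical, and it transforms the system into the polynomial
Hamiltonian system with `H₂ = x²y² - tx²y + (a-b-2h)xy - atx - y`. -/
theorem quantum_PIII_chart2_hamiltonian
    {R : Type*} [Ring R] [Algebra ℂ R]
    (h a b t : ℂ) (q p : R) [Invertible q]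
    (hcomm : q * p - p * q = h • (1 : R))
    (H x y H₂ : R)
    (hH : H = q ^ 2 * p ^ 2 - q ^ 2 * p + (a + b) • (q * p) - b • q + t • p)
    (hx : x = ⅟q) (hy : y = q ^ 2 - a • q - q ^ 2 * p)
    (hH₂ : H₂ = x ^ 2 * y ^ 2 - t • (x ^ 2 * y) + (a - b - 2 * h) • (x * y)
        - (a * t) • x - y) :
    x * y - y * x = h • (1 : R) ∧
    x * H - H * x = x * H₂ - H₂ * x ∧
    y * H - H * y = y * H₂ - H₂ * y := by
  obtain rfl : y = chart2Y a q p := hy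
  subst hx
  have hH₂H : H₂ = H + (a * (b + h) - t) • 1 := by
    rw [hH₂, hH, chart2_hamiltonian_eq a b t hcomm]
  refine ⟨chart2_canonical a hcomm, ?_, ?_⟩ <;> rw [hH₂H, commutator_add_smul_one]
end

section
/- Let R be an associative unital ℂ-algebra, q, p ∈ R with qp − pq = h·1 (h ∈ ℂ), and suppose p is invertible in R. For a parameter a ∈ ℂ, set x = ap − qp² and y = p⁻¹. Then xy − yx = h·1; i.e., the Takano chart-1 change of variables for the quantum Painlevé IV (and Painlevé V) equation is a canonical transformation. -/
/-!
With `y = p⁻¹`, the term `a p` of `x` commutes with `y`, while `p⁻¹ (q p²) - (q p²) p⁻¹` is the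
conjugate `p⁻¹ (q p - p q) p`. So `x y - y x` is the conjugate of the scalar `h` by `p`, i.e. `h`.
-/

section

variable {R : Type*} [Ring R]

theorem invOf_mul_mul_sq_sub (q p : R) [Invertible p] :
    ⅟p * (q * p ^ 2) - q * p ^ 2 * ⅟p = ⅟p * (q * p - p * q) * p := by
  simp only [sq, sub_mul, mul_sub, mul_assoc, mul_invOf_self, mul_one, invOf_mul_cancel_left]

theorem smul_sub_mul_sq_commutator_invOf {K : Type*} [CommSemiring K] [Algebra K R]
    (a : K) (q p : R) [Invertible p] :
    (a • p - q * p ^ 2) * ⅟p - ⅟p * (a • p - q * p ^ 2) = ⅟p * (q * p - p * q) * p := by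
  rw [← invOf_mul_mul_sq_sub, sub_mul, mul_sub, smul_mul_assoc, mul_smul_comm, mul_invOf_self,
    invOf_mul_self]
  abel

end

/-- Takano chart-1 change of variables for quantum Painlevé IV (and V) is
canonical: if `q p - p q = h • 1` and `p` is invertible, then with
`x = ap - qp²` and `y = p⁻¹` one has `x y - y x = h • 1`. -/
theorem quantum_PIV_chart1_canonical
    {R : Type*} [Ring R] [Algebra ℂ R]
    (h a : ℂ) (q p : R) [Invertible p]
    (hcomm : q * p - p * q = h • (1 : R))
    (x y : R) (hx : x = a • p - q * p ^ 2) (hy : y = ⅟p) :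
    x * y - y * x = h • (1 : R) := by
  rw [hx, hy, smul_sub_mul_sq_commutator_invOf, hcomm, mul_smul_comm, mul_one, smul_mul_assoc,
    invOf_mul_self]
end

section
/- Let R be an associative unital ℂ-algebra, q, p ∈ R with qp − pq = h·1 (h ∈ ℂ), p invertible, and a, b, t ∈ ℂ. Put H_IV = tqp − qp² − q²p + ap − bq, and set x = ap − qp², y = p⁻¹. Let H₁(x,y) = −x²y³ + (2a+b+2h)xy² − txy + x − a(a+b+h)y (normally ordered, x-powers to the left). Then [x, H_IV] = [x, H₁(x,y)] and [y, H_IV] = [y, H₁(x,y)]; that is, the quantum Painlevé IV system is transformed in the chart-1 coordinates into the polynomial Hamiltonian system with Hamiltonian H₁. -/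
/-!
Normal ordering with `p q = q p - h` and `p q p⁻¹ = q - h p⁻¹` turns the chart-1 Hamiltonian
into `H₁ = H_IV - t a`. The two Hamiltonians differ by a scalar, so they have the same
commutator with every element.
-/

section Commutator

variable {K R : Type*} [CommSemiring K] [Ring R] [Algebra K R]

theorem commutator_sub_smul_one (x H : R) (c : K) :
    x * (H - c • 1) - (H - c • 1) * x = x * H - H * x := by
  simp only [mul_sub, sub_mul, mul_smul_comm, smul_mul_assoc, mul_one, one_mul]
  abel

end Commutator

section CanonicalCommutation

variable {K R : Type*} [CommRing K] [Ring R] [Algebra K R] {h : K} {q p : R}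

theorem mul_eq_mul_sub_smul_one_of_ccr (hcomm : q * p - p * q = h • 1) :
    p * q = q * p - h • 1 := by
  rw [← hcomm]
  abel

variable [Invertible p]

theorem mul_mul_invOf_of_ccr (hcomm : q * p - p * q = h • 1) :
    p * q * ⅟p = q - h • ⅟p := by
  rw [mul_eq_mul_sub_smul_one_of_ccr hcomm, sub_mul, mul_invOf_cancel_right, smul_mul_assoc,
    one_mul]

theorem sq_mul_mul_invOf_of_ccr (hcomm : q * p - p * q = h • 1) :
    p ^ 2 * q * ⅟p = q * p - (2 * h) • 1 := by
  rw [sq, mul_assoc p p q, mul_assoc p, mul_mul_invOf_of_ccr hcomm, mul_sub,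
    mul_eq_mul_sub_smul_one_of_ccr hcomm, mul_smul_comm, mul_invOf_self]
  module

theorem chart1_mul_invOf (a : K) : (a • p - q * p ^ 2) * ⅟p = a • 1 - q * p := by
  rw [sub_mul, smul_mul_assoc, mul_invOf_self, sq, ← mul_assoc, mul_invOf_cancel_right]

theorem chart1_mul_invOf_sq (a : K) : (a • p - q * p ^ 2) * ⅟p ^ 2 = a • ⅟p - q := by
  rw [sq (⅟p), ← mul_assoc, chart1_mul_invOf, sub_mul, smul_mul_assoc, one_mul,
    mul_invOf_cancel_right]

theorem chart1_mul_mul_invOf (a : K) (hcomm : q * p - p * q = h • 1) :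
    (a • p - q * p ^ 2) * q * ⅟p = (a + 2 * h) • q - (a * h) • ⅟p - q ^ 2 * p := by
  rw [sub_mul, sub_mul, smul_mul_assoc, smul_mul_assoc, mul_mul_invOf_of_ccr hcomm,
    mul_assoc q, mul_assoc q, sq_mul_mul_invOf_of_ccr hcomm, mul_sub,
    mul_smul_comm, mul_one, ← mul_assoc, ← sq]
  module

theorem chart1_sq_mul_invOf_cube (a : K) (hcomm : q * p - p * q = h • 1) :
    (a • p - q * p ^ 2) ^ 2 * ⅟p ^ 3
      = q ^ 2 * p - (2 * a + 2 * h) • q + (a * (a + h)) • ⅟p := by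
  have hsplit : ∀ x : R, x ^ 2 * ⅟p ^ 3 = x * (x * ⅟p) * ⅟p ^ 2 := fun x => by
    simp only [pow_succ, pow_zero, one_mul, mul_assoc]
  rw [hsplit, chart1_mul_invOf, mul_sub, mul_smul_comm, mul_one, sub_mul, smul_mul_assoc,
    chart1_mul_invOf_sq, ← mul_assoc _ q p, mul_assoc _ p, sq (⅟p), ← mul_assoc p,
    mul_invOf_self, one_mul, chart1_mul_mul_invOf a hcomm]
  module

theorem chart1_hamiltonian_eq (a b t : K) (hcomm : q * p - p * q = h • 1) {x y : R}
    (hx : x = a • p - q * p ^ 2) (hy : y = ⅟p) :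
    -(x ^ 2 * y ^ 3) + (2 * a + b + 2 * h) • (x * y ^ 2) - t • (x * y) + x
        - (a * (a + b + h)) • y
      = t • (q * p) - q * p ^ 2 - q ^ 2 * p + a • p - b • q - (t * a) • 1 := by
  subst hx hy
  rw [chart1_sq_mul_invOf_cube a hcomm, chart1_mul_invOf_sq, chart1_mul_invOf]
  module

end CanonicalCommutation

/-- In the Takano chart-1 coordinates `x = ap - qp²`, `y = p⁻¹`, the quantum
Painlevé IV system becomes the polynomial Hamiltonian system with
`H₁ = -x²y³ + (2a+b+2h)xy² - txy + x - a(a+b+h)y`. -/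
theorem quantum_PIV_chart1_hamiltonian
    {R : Type*} [Ring R] [Algebra ℂ R]
    (h a b t : ℂ) (q p : R) [Invertible p]
    (hcomm : q * p - p * q = h • (1 : R))
    (H x y H₁ : R)
    (hH : H = t • (q * p) - q * p ^ 2 - q ^ 2 * p + a • p - b • q)
    (hx : x = a • p - q * p ^ 2) (hy : y = ⅟p)
    (hH₁ : H₁ = -(x ^ 2 * y ^ 3) + (2 * a + b + 2 * h) • (x * y ^ 2)
        - t • (x * y) + x - (a * (a + b + h)) • y) :
    x * H - H * x = x * H₁ - H₁ * x ∧
    y * H - H * y = y * H₁ - H₁ * y := by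
  have hshift : H₁ = H - (t * a) • 1 := by
    rw [hH₁, hH, chart1_hamiltonian_eq a b t hcomm hx hy]
  rw [hshift]
  exact ⟨(commutator_sub_smul_one x H _).symm, (commutator_sub_smul_one y H _).symm⟩
end

section
/- Let R be an associative unital ℂ-algebra, q, p ∈ R with qp − pq = h·1 (h ∈ ℂ), q invertible, and a, b, c, t ∈ ℂ. Put H_V = q²p² + tq²p − qp² − tqp − (a+c)qp + ap + btq, and set x = q⁻¹, y = −bq − q²p. Let H₂(x,y) = −x³y² + x²y² + (−a−2b+2h)x²y + (a+2b+c−2h+t)xy − b(a+b−h)x − ty (normally ordered, x-powers to the left). Then [x, H_V] = [x, H₂(x,y)] and [y, H_V] = [y, H₂(x,y)]; that is, the quantum Painlevé V system is transformed in the chart-2 coordinates into the polynomial Hamiltonian system with Hamiltonian H₂. -/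
/-!
In the chart-2 coordinates `x = q⁻¹`, `y = -bq - q²p`, normal ordering with `pq = qp - h`
turns `H₂(x, y)` into `H_V(q, p)` plus the scalar `b(h - a - b - c - t)`: the coefficients of
`x = q⁻¹` cancel, and the `h`-corrections of `H₂` are exactly those created by reordering.
A scalar is central, so `H₂` and `H_V` have the same commutators with `x` and `y`.
-/

theorem mul_add_sub_add_mul_of_commute {R : Type*} [Ring R] {x H c : R} (hc : Commute x c) :
    x * (H + c) - (H + c) * x = x * H - H * x := by
  rw [mul_add, add_mul, hc.eq]
  abel

namespace QuantumPainleveV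

variable {K R : Type*} [CommRing K] [Ring R] [Algebra K R] {h : K} {q p : R}

theorem mul_eq_mul_sub_smul_one_of_ccr (hcomm : q * p - p * q = h • (1 : R)) :
    p * q = q * p - h • 1 := by
  rw [← hcomm]
  abel

theorem mul_sq_mul_of_ccr (hcomm : q * p - p * q = h • (1 : R)) :
    p * q ^ 2 * p = q ^ 2 * p ^ 2 - (2 * h) • (q * p) := by
  have hpq := mul_eq_mul_sub_smul_one_of_ccr hcomm
  calc p * q ^ 2 * p = (p * q) * (q * p) := by rw [sq, mul_assoc, mul_assoc, mul_assoc]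
    _ = (q * p - h • 1) * (q * p) := by rw [hpq]
    _ = q * (p * q) * p - h • (q * p) := by
      rw [sub_mul, smul_mul_assoc, one_mul, mul_assoc, mul_assoc, mul_assoc]
    _ = q ^ 2 * p ^ 2 - (2 * h) • (q * p) := by
      rw [hpq]
      simp only [mul_sub, sub_mul, mul_smul_comm, smul_mul_assoc, mul_one, sq, mul_assoc]
      module

def hamiltonianV (a b c t : K) (q p : R) : R :=
  q ^ 2 * p ^ 2 + t • (q ^ 2 * p) - q * p ^ 2 - t • (q * p) - (a + c) • (q * p) + a • p
    + (b * t) • q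

def hamiltonianChart2 (h a b c t : K) (x y : R) : R :=
  -(x ^ 3 * y ^ 2) + x ^ 2 * y ^ 2 + (-a - 2 * b + 2 * h) • (x ^ 2 * y)
    + (a + 2 * b + c - 2 * h + t) • (x * y) - (b * (a + b - h)) • x - t • y

def chart2Y (b : K) (q p : R) : R := -(b • q) - q ^ 2 * p

variable [Invertible q] (b : K)

theorem invOf_mul_chart2Y : ⅟q * chart2Y b q p = -(b • 1) - q * p := by
  rw [chart2Y]
  simp only [mul_sub, mul_neg, mul_smul_comm, sq, ← mul_assoc, invOf_mul_self, one_mul]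

theorem invOf_sq_mul_chart2Y : ⅟q ^ 2 * chart2Y b q p = -(b • ⅟q) - p := by
  rw [sq, mul_assoc, invOf_mul_chart2Y]
  simp only [mul_sub, mul_neg, mul_smul_comm, mul_one, ← mul_assoc, invOf_mul_self, one_mul]

theorem invOf_sq_mul_chart2Y_sq (hcomm : q * p - p * q = h • (1 : R)) :
    ⅟q ^ 2 * chart2Y b q p ^ 2
      = q ^ 2 * p ^ 2 + (2 * b - 2 * h) • (q * p) + (b ^ 2 - b * h) • 1 := by
  rw [sq (chart2Y b q p), ← mul_assoc, invOf_sq_mul_chart2Y, sub_mul, neg_mul, smul_mul_assoc,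
    invOf_mul_chart2Y, chart2Y, mul_sub, mul_neg, mul_smul_comm, ← mul_assoc p,
    mul_sq_mul_of_ccr hcomm, mul_eq_mul_sub_smul_one_of_ccr hcomm]
  module

theorem invOf_cube_mul_chart2Y_sq (hcomm : q * p - p * q = h • (1 : R)) :
    ⅟q ^ 3 * chart2Y b q p ^ 2
      = q * p ^ 2 + (2 * b - 2 * h) • p + (b ^ 2 - b * h) • ⅟q := by
  rw [pow_succ', mul_assoc, invOf_sq_mul_chart2Y_sq b hcomm]
  simp only [mul_add, mul_smul_comm, mul_one, sq, ← mul_assoc, invOf_mul_self, one_mul]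

theorem hamiltonianChart2_invOf_chart2Y (hcomm : q * p - p * q = h • (1 : R)) (a c t : K) :
    hamiltonianChart2 h a b c t (⅟q) (chart2Y b q p)
      = hamiltonianV a b c t q p + (b * (h - a - b - c - t)) • 1 := by
  rw [hamiltonianChart2, invOf_cube_mul_chart2Y_sq b hcomm, invOf_sq_mul_chart2Y_sq b hcomm,
    invOf_sq_mul_chart2Y, invOf_mul_chart2Y, hamiltonianV, chart2Y]
  module

end QuantumPainleveV

/-- In the Takano chart-2 coordinates `x = q⁻¹`, `y = -bq - q²p`, the quantum
Painlevé V system becomes the polynomial Hamiltonian system with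
`H₂ = -x³y² + x²y² + (-a-2b+2h)x²y + (a+2b+c-2h+t)xy - b(a+b-h)x - ty`. -/
theorem quantum_PV_chart2_hamiltonian
    {R : Type*} [Ring R] [Algebra ℂ R]
    (h a b c t : ℂ) (q p : R) [Invertible q]
    (hcomm : q * p - p * q = h • (1 : R))
    (H x y H₂ : R)
    (hH : H = q ^ 2 * p ^ 2 + t • (q ^ 2 * p) - q * p ^ 2 - t • (q * p)
        - (a + c) • (q * p) + a • p + (b * t) • q)
    (hx : x = ⅟q) (hy : y = -(b • q) - q ^ 2 * p)
    (hH₂ : H₂ = -(x ^ 3 * y ^ 2) + x ^ 2 * y ^ 2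
        + (-a - 2 * b + 2 * h) • (x ^ 2 * y)
        + (a + 2 * b + c - 2 * h + t) • (x * y)
        - (b * (a + b - h)) • x - t • y) :
    x * H - H * x = x * H₂ - H₂ * x ∧
    y * H - H * y = y * H₂ - H₂ * y := by
  have hshift : H₂ = H + (b * (h - a - b - c - t)) • (1 : R) := by
    rw [hH₂, hH, hx, hy]
    exact QuantumPainleveV.hamiltonianChart2_invOf_chart2Y b hcomm a c t
  have central : ∀ z : R, Commute z ((b * (h - a - b - c - t)) • (1 : R)) :=
    fun z => (Commute.one_right z).smul_right _
  rw [hshift]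
  exact ⟨(mul_add_sub_add_mul_of_commute (central x)).symm,
    (mul_add_sub_add_mul_of_commute (central y)).symm⟩
end

section
/- Coincidence with Nagoya's quantum Painlevé III Hamiltonian. Let R be an associative unital ℂ-algebra, q, p ∈ R with qp − pq = h·1 (h ∈ ℂ), and a, b, c, t ∈ ℂ. Put H_III = q²p² − q²p + (a+b)qp − bq + tp, and set α₀ = b + h, α₂ = a + h. Define Nagoya's Hamiltonian Ĥ_III = (1/4)(pq(p−1)q + (p−1)qpq + qpq(p−1) + q(p−1)qp) + (1/2)(α₀+α₂)(qp+pq) − α₀q + tp. Then there exists a scalar γ ∈ ℂ such that Ĥ_III = H_III + γ·1; i.e., the quantum Painlevé III Hamiltonian characterized by the holomorphy property coincides with Nagoya's Hamiltonian up to redefinition of parameters and an additive central constant. -/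
/-! Using `pq = qp - h`, every word in `q, p` is rewritten in normal order (powers of `q` to the
left). Nagoya's symmetrized quartic term becomes `q²p² - q²p - 2h qp + h q + h²/2` and
`qp + pq = 2qp - h`, so with `α₀ = b + h`, `α₂ = a + h` the two Hamiltonians agree except for
the constant `γ = -h(a + b + h)/2`. -/

namespace CanonicalCommutation

variable {K R : Type*} [CommRing K] [Ring R] [Algebra K R] {q p : R} {h : K}

theorem p_mul_q (hcomm : q * p - p * q = h • 1) : p * q = q * p - h • 1 := by
  rw [← hcomm, sub_sub_cancel]

theorem q_mul_p_mul_q (hcomm : q * p - p * q = h • 1) : q * p * q = q ^ 2 * p - h • q := by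
  rw [mul_assoc, p_mul_q hcomm, mul_sub, mul_smul_comm, mul_one, ← mul_assoc, sq]

theorem p_mul_q_mul_q (hcomm : q * p - p * q = h • 1) :
    p * q * q = q ^ 2 * p - (2 * h) • q := by
  rw [p_mul_q hcomm, sub_mul, q_mul_p_mul_q hcomm, smul_mul_assoc, one_mul]
  module

theorem q_mul_p_mul_q_mul_p (hcomm : q * p - p * q = h • 1) :
    q * p * q * p = q ^ 2 * p ^ 2 - h • (q * p) := by
  rw [q_mul_p_mul_q hcomm, sub_mul, smul_mul_assoc, mul_assoc, ← sq]

theorem p_mul_q_mul_p_mul_q (hcomm : q * p - p * q = h • 1) :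
    p * q * p * q = q ^ 2 * p ^ 2 - (3 * h) • (q * p) + h ^ 2 • 1 := by
  rw [mul_assoc (p * q), p_mul_q hcomm, mul_sub, sub_mul, ← mul_assoc,
    q_mul_p_mul_q_mul_p hcomm, mul_smul_comm, mul_one, smul_mul_assoc, one_mul]
  module

theorem mul_add_mul_swap (hcomm : q * p - p * q = h • 1) :
    q * p + p * q = (2 : K) • (q * p) - h • 1 := by
  rw [p_mul_q hcomm]
  module

theorem nagoya_quartic_eq (hcomm : q * p - p * q = h • 1) :
    p * q * (p - 1) * q + (p - 1) * q * p * q + q * p * q * (p - 1) + q * (p - 1) * q * p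
      = (4 : K) • (q ^ 2 * p ^ 2 - q ^ 2 * p) - (8 * h) • (q * p) + (4 * h) • q
        + (2 * h ^ 2) • 1 := by
  simp only [mul_sub, sub_mul, mul_one, one_mul]
  rw [p_mul_q_mul_p_mul_q hcomm, p_mul_q_mul_q hcomm, q_mul_p_mul_q_mul_p hcomm,
    q_mul_p_mul_q hcomm, ← sq]
  module

end CanonicalCommutation

open CanonicalCommutation in
theorem quantum_PIII_coincides_with_Nagoya_general
    {R : Type*} [Ring R] [Algebra ℂ R]
    (h a b t : ℂ) (q p : R)
    (hcomm : q * p - p * q = h • (1 : R))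
    (α₀ α₂ : ℂ) (hα₀ : α₀ = b + h) (hα₂ : α₂ = a + h)
    (H HN : R)
    (hH : H = q ^ 2 * p ^ 2 - q ^ 2 * p + (a + b) • (q * p) - b • q + t • p)
    (hHN : HN = (1 / 4 : ℂ) • (p * q * (p - 1) * q + (p - 1) * q * p * q
        + q * p * q * (p - 1) + q * (p - 1) * q * p)
        + ((α₀ + α₂) / 2) • (q * p + p * q) - α₀ • q + t • p) :
    ∃ γ : ℂ, HN = H + γ • (1 : R) := by
  refine ⟨-(h * (a + b + h)) / 2, ?_⟩
  rw [hHN, hH, hα₀, hα₂, nagoya_quartic_eq hcomm, mul_add_mul_swap hcomm]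
  module

/-- Coincidence with Nagoya's quantum Painlevé III Hamiltonian: with
`α₀ = b + h`, `α₂ = a + h`, Nagoya's Hamiltonian
`HN = (1/4)(pq(p-1)q + (p-1)qpq + qpq(p-1) + q(p-1)qp) + (1/2)(α₀+α₂)(qp+pq) - α₀q + tp`
equals `H_III = q²p² - q²p + (a+b)qp - bq + tp` up to an additive central
constant. -/
theorem quantum_PIII_coincides_with_Nagoya
    {R : Type*} [Ring R] [Algebra ℂ R]
    (h a b c t : ℂ) (q p : R)
    (hcomm : q * p - p * q = h • (1 : R))
    (α₀ α₂ : ℂ) (hα₀ : α₀ = b + h) (hα₂ : α₂ = a + h)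
    (H HN : R)
    (hH : H = q ^ 2 * p ^ 2 - q ^ 2 * p + (a + b) • (q * p) - b • q + t • p)
    (hHN : HN = (1 / 4 : ℂ) • (p * q * (p - 1) * q + (p - 1) * q * p * q
        + q * p * q * (p - 1) + q * (p - 1) * q * p)
        + ((α₀ + α₂) / 2) • (q * p + p * q) - α₀ • q + t • p) :
    ∃ γ : ℂ, HN = H + γ • (1 : R) :=
  quantum_PIII_coincides_with_Nagoya_general h a b t q p hcomm α₀ α₂ hα₀ hα₂ H HN hH hHN
end

section
/- Coincidence with Nagoya's quantum Painlevé V Hamiltonian. Let R be an associative unital ℂ-algebra, q, p ∈ R with qp − pq = h·1 (h ∈ ℂ), and a, b, c, t ∈ ℂ. Put H_V = q²p² + tq²p − qp² − tqp − (a+c)qp + ap + btq, and set α₁ = a − h, α₂ = b + h, α₃ = c − h. Define Nagoya's Hamiltonian Ĥ_V = (1/2)(qpqp + pqpq) − pqp + tqpq − (t/2)(qp + pq) + α₁p + α₂tq − (1/2)(α₁+α₃)(qp + pq). Then there exists a scalar γ ∈ ℂ[t] (a complex polynomial in t, central in R) such that Ĥ_V = H_V + γ·1; i.e., the quantum Painlevé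 V Hamiltonian characterized by the holomorphy property coincides with Nagoya's Hamiltonian up to redefinition of parameters and an additive central term. -/
/-!
Using `p q = q p - h`, every word in `q, p` is brought to normal order (powers of `q` to the
left); Nagoya's Hamiltonian then becomes `H_V` plus the scalar `(h (a + c) - h²) / 2 + (h / 2) t`,
once the parameter shifts `α₁ = a - h`, `α₂ = b + h`, `α₃ = c - h` absorb the linear terms
produced by reordering.
-/

namespace CCR

variable {K R : Type*} [CommRing K] [Ring R] [Algebra K R] {q p : R} {h : K}

theorem pq_normalOrder (hcomm : q * p - p * q = h • (1 : R)) : p * q = q * p - h • (1 : R) := by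
  rw [← hcomm, sub_sub_cancel]

theorem qpq_normalOrder (hcomm : q * p - p * q = h • (1 : R)) :
    q * p * q = q ^ 2 * p - h • q := by
  rw [mul_assoc, pq_normalOrder hcomm, mul_sub, mul_smul_comm, mul_one, ← mul_assoc, sq]

theorem pqp_normalOrder (hcomm : q * p - p * q = h • (1 : R)) :
    p * q * p = q * p ^ 2 - h • p := by
  rw [pq_normalOrder hcomm, sub_mul, smul_mul_assoc, one_mul, mul_assoc, sq]

theorem qpqp_normalOrder (hcomm : q * p - p * q = h • (1 : R)) :
    q * p * q * p = q ^ 2 * p ^ 2 - h • (q * p) := by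
  rw [qpq_normalOrder hcomm, sub_mul, smul_mul_assoc, mul_assoc, sq p]

theorem pqpq_normalOrder (hcomm : q * p - p * q = h • (1 : R)) :
    p * q * p * q = q ^ 2 * p ^ 2 - (3 * h) • (q * p) + h ^ 2 • (1 : R) := by
  rw [mul_assoc (p * q) p q, pq_normalOrder hcomm]
  simp only [sub_mul, mul_sub, smul_mul_assoc, mul_smul_comm, one_mul, mul_one, ← mul_assoc,
    qpqp_normalOrder hcomm]
  module

end CCR

open Polynomial CCR

/-- Coincidence with Nagoya's quantum Painlevé V Hamiltonian: with
`α₁ = a - h`, `α₂ = b + h`, `α₃ = c - h`, Nagoya's Hamiltonian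
`HN = (1/2)(qpqp + pqpq) - pqp + tqpq - (t/2)(qp+pq) + α₁p + α₂tq - (1/2)(α₁+α₃)(qp+pq)`
equals `H_V = q²p² + tq²p - qp² - tqp - (a+c)qp + ap + btq` up to an additive
central term `γ • 1` with `γ ∈ ℂ[t]` a complex polynomial in `t`. -/
theorem quantum_PV_coincides_with_Nagoya
    {R : Type*} [Ring R] [Algebra ℂ R]
    (h a b c : ℂ) (q p : R)
    (hcomm : q * p - p * q = h • (1 : R))
    (α₁ α₂ α₃ : ℂ) (hα₁ : α₁ = a - h) (hα₂ : α₂ = b + h) (hα₃ : α₃ = c - h)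
    (H HN : ℂ → R)
    (hH : ∀ t : ℂ, H t = q ^ 2 * p ^ 2 + t • (q ^ 2 * p) - q * p ^ 2
        - t • (q * p) - (a + c) • (q * p) + a • p + (b * t) • q)
    (hHN : ∀ t : ℂ, HN t = (1 / 2 : ℂ) • (q * p * q * p + p * q * p * q)
        - p * q * p + t • (q * p * q) - (t / 2) • (q * p + p * q)
        + α₁ • p + (α₂ * t) • q - ((α₁ + α₃) / 2) • (q * p + p * q)) :
    ∃ γ : Polynomial ℂ, ∀ t : ℂ, HN t = H t + (γ.eval t) • (1 : R) := by
  refine ⟨C ((h * (a + c) - h ^ 2) / 2) + C (h / 2) * X, fun t => ?_⟩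
  rw [hHN, hH, hα₁, hα₂, hα₃, qpqp_normalOrder hcomm, pqpq_normalOrder hcomm,
    pqp_normalOrder hcomm, qpq_normalOrder hcomm, pq_normalOrder hcomm]
  simp only [eval_add, eval_mul, eval_C, eval_X]
  module
end
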